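/- Uniform dissipation bound: there exists a constant C > 0, depending only on ℓ, α, T, β, μ, u̲, ū, u₀ and u_∂ but not on N or τ, such that for every integer N ≥ 2, every time step τ ∈ (0,T), and every discrete solution (u^k) of the scheme with initial values u^0_i = u₀(ih) and boundary data p^k = u_∂(t^k, 0), q^k = u_∂(t^k, ℓ), one has Σ_{k ≥ 1, t^k ≤ T} τ·D(u^k) ≤ C, where D(v) = h Σ_{i=1}^{N} μ(δ_i)δ_i + α(v_0² + v_N²) with δ_i = (v_i − v_{i−1})/h. -/

import Mathlib

open Filter

/-- Nodal equations of one implicit Euler step of the mass-lumped P1 scheme. -/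
def DiscreteStep (β μ : ℝ → ℝ) (h τ α : ℝ) (N : ℕ) (p q : ℝ) (w u : ℕ → ℝ) : Prop :=
  (∀ i : ℕ, 1 ≤ i → i ≤ N - 1 →
      h / τ * (β (u i) - β (w i)) -
        (μ ((u (i + 1) - u i) / h) - μ ((u i - u (i - 1)) / h)) = 0) ∧
    h / (2 * τ) * (β (u 0) - β (w 0)) - μ ((u 1 - u 0) / h) + α * u 0 = α * p ∧
    h / (2 * τ) * (β (u N) - β (w N)) + μ ((u N - u (N - 1)) / h) + α * u N = α * q

/-- The discrete dissipation functional
`D(v) = h ∑_{i=1}^N μ(δᵢ) δᵢ + α (v₀² + v_N²)` with `δᵢ = (vᵢ - vᵢ₋₁)/h`. -/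
noncomputable def dissipation (μ : ℝ → ℝ) (h α : ℝ) (N : ℕ) (v : ℕ → ℝ) : ℝ :=
  h * (∑ i ∈ Finset.Icc 1 N, μ ((v i - v (i - 1)) / h) * ((v i - v (i - 1)) / h)) +
    α * (v 0 ^ 2 + v N ^ 2)

noncomputable def Bfun (β : ℝ → ℝ) (x : ℝ) : ℝ := ∫ s in (0:ℝ)..x, β s
noncomputable def Gfun (β : ℝ → ℝ) (x : ℝ) : ℝ := x * β x - Bfun β x

lemma Bfun_key (β : ℝ → ℝ) (hβc : Continuous β) (hβm : Monotone β) (u w : ℝ) :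
    β w * (u - w) ≤ Bfun β u - Bfun β w := by
  have hint : ∀ a b : ℝ, IntervalIntegrable β MeasureTheory.volume a b :=
    fun a b => hβc.intervalIntegrable a b
  have hdiff : Bfun β u - Bfun β w = ∫ s in w..u, β s := by
    rw [Bfun, Bfun, intervalIntegral.integral_interval_sub_left (hint 0 u) (hint 0 w)]
  rw [hdiff]
  rcases le_total w u with hwu | huw
  · have : ∫ s in w..u, β w ≤ ∫ s in w..u, β s := by
      apply intervalIntegral.integral_mono_on hwu (intervalIntegrable_const) (hint w u)
      intro x hx; exact hβm hx.1
    simpa [intervalIntegral.integral_const, mul_comm] using this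
  · have h1 : ∫ s in u..w, β s ≤ ∫ s in u..w, β w := by
      apply intervalIntegral.integral_mono_on huw (hint u w) (intervalIntegrable_const)
      intro x hx; exact hβm hx.2
    have h2 : ∫ s in w..u, β s = -∫ s in u..w, β s :=
      (intervalIntegral.integral_symm u w)
    rw [h2]
    have := neg_le_neg h1
    calc β w * (u - w) = -((w - u) * β w) := by ring
    _ ≤ -∫ s in u..w, β s := by
        simpa [intervalIntegral.integral_const] using this

lemma Gfun_nonneg (β : ℝ → ℝ) (hβc : Continuous β) (hβm : Monotone β) (u : ℝ) :
    0 ≤ Gfun β u := by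
  have h := Bfun_key β hβc hβm 0 u
  have hB0 : Bfun β 0 = 0 := by simp [Bfun]
  rw [hB0] at h
  simp only [Gfun]; nlinarith

lemma Gfun_diff_le (β : ℝ → ℝ) (hβc : Continuous β) (hβm : Monotone β) (u w : ℝ) :
    Gfun β u - Gfun β w ≤ (β u - β w) * u := by
  have h := Bfun_key β hβc hβm u w
  simp only [Gfun]; nlinarith

lemma Gfun_mono_bound (β : ℝ → ℝ) (hβc : Continuous β) (hβm : Monotone β)
    (u w : ℝ) (hu : 0 ≤ u) (huw : u ≤ w) : Gfun β u ≤ Gfun β w := by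
  have h := Bfun_key β hβc hβm u w
  have hb : β u ≤ β w := hβm huw
  simp only [Gfun]; nlinarith

noncomputable def Efun (β : ℝ → ℝ) (h : ℝ) (N : ℕ) (v : ℕ → ℝ) : ℝ :=
  h * (∑ i ∈ Finset.Icc 1 (N-1), Gfun β (v i) + Gfun β (v 0)/2 + Gfun β (v N)/2)

lemma abel_sum (m v : ℕ → ℝ) : ∀ N : ℕ, 1 ≤ N →
    ∑ i ∈ Finset.Icc 1 (N-1), (m (i+1) - m i) * v i + m 1 * v 0 - m N * v N
      = -∑ i ∈ Finset.Icc 1 N, m i * (v i - v (i-1)) := by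
  intro N
  induction N with
  | zero => intro h; omega
  | succ n ih =>
    intro _
    rcases Nat.eq_zero_or_pos n with hn | hn
    · subst hn; simp; ring
    · have h1 : n + 1 - 1 = n := rfl
      have h2 : n - 1 + 1 = n := by omega
      have e1 := Finset.sum_Icc_succ_top (f := fun i => (m (i+1) - m i) * v i)
        (by omega : 1 ≤ n - 1 + 1)
      rw [h2] at e1
      have e2 := Finset.sum_Icc_succ_top (f := fun i => m i * (v i - v (i-1)))
        (by omega : 1 ≤ n + 1)
      have := ih hn
      rw [h1, e1, e2]
      simp only [Nat.add_sub_cancel] at *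
      linarith

lemma mu_sign (μ : ℝ → ℝ) (hμc : Continuous μ) (hμ0 : μ 0 = 0)
    (hμ' : ∀ s : ℝ, s ≠ 0 → 0 < deriv μ s) (s : ℝ) : 0 ≤ μ s * s := by
  rcases lt_trichotomy s 0 with hs | hs | hs
  · have hmono : StrictMonoOn μ (Set.Iic 0) := by
      apply strictMonoOn_of_deriv_pos (convex_Iic 0) (hμc.continuousOn)
      intro x hx
      rw [interior_Iic] at hx
      exact hμ' x (ne_of_lt hx)
    have : μ s < μ 0 := hmono (Set.mem_Iic.2 (le_of_lt hs)) (Set.mem_Iic.2 (le_refl 0)) hs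
    rw [hμ0] at this
    nlinarith
  · simp [hs, hμ0]
  · have hmono : StrictMonoOn μ (Set.Ici 0) := by
      apply strictMonoOn_of_deriv_pos (convex_Ici 0) (hμc.continuousOn)
      intro x hx
      rw [interior_Ici] at hx
      exact hμ' x (ne_of_gt hx)
    have : μ 0 < μ s := hmono (Set.mem_Ici.2 (le_refl 0)) (Set.mem_Ici.2 (le_of_lt hs)) hs
    rw [hμ0] at this
    nlinarith

set_option maxHeartbeats 1600000 in
lemma step_bound (β μ : ℝ → ℝ) (hβc : Continuous β) (hβm : Monotone β)
    (hμs : ∀ s : ℝ, 0 ≤ μ s * s)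
    (h τ α uup p q : ℝ) (hh : 0 < h) (hτ : 0 < τ) (hα : 0 < α)
    (hp1 : 0 ≤ p) (hp2 : p ≤ uup) (hq1 : 0 ≤ q) (hq2 : q ≤ uup)
    (N : ℕ) (hN : 2 ≤ N) (w v : ℕ → ℝ)
    (hstep : DiscreteStep β μ h τ α N p q w v) :
    τ * dissipation μ h α N v ≤
      2 * (Efun β h N w - Efun β h N v) + 2 * τ * α * uup^2 := by
  simp only [Efun]
  obtain ⟨eqI, eq0, eqN⟩ := hstep
  have hτ' : τ ≠ 0 := ne_of_gt hτ
  have hh' : h ≠ 0 := ne_of_gt hh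
  -- F1: interior equations summed, multiplied by τ and v i
  have F1 : h * ∑ i ∈ Finset.Icc 1 (N-1), (β (v i) - β (w i)) * v i
      = τ * ∑ i ∈ Finset.Icc 1 (N-1), (μ ((v (i+1) - v i) / h) - μ ((v i - v (i-1)) / h)) * v i := by
    rw [Finset.mul_sum, Finset.mul_sum]
    apply Finset.sum_congr rfl
    intro i hi
    rw [Finset.mem_Icc] at hi
    have e := eqI i hi.1 hi.2
    have e2 : h / τ * (β (v i) - β (w i))
        = μ ((v (i+1) - v i) / h) - μ ((v i - v (i-1)) / h) := by linarith
    rw [div_mul_eq_mul_div, div_eq_iff hτ'] at e2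
    linear_combination v i * e2
  -- Abel summation
  have F2 := abel_sum (fun i => μ ((v i - v (i-1)) / h)) v N (by omega)
  simp only [Nat.add_sub_cancel] at F2
  -- F3: rescale the dissipation sum
  have F3 : ∑ i ∈ Finset.Icc 1 N, μ ((v i - v (i-1)) / h) * (v i - v (i-1))
      = h * ∑ i ∈ Finset.Icc 1 N, μ ((v i - v (i-1)) / h) * ((v i - v (i-1)) / h) := by
    rw [Finset.mul_sum]
    apply Finset.sum_congr rfl
    intro i _
    field_simp
  -- F4 / F5 : boundary equations multiplied by 2 τ and v 0, v N
  have h2τ : (2:ℝ) * τ ≠ 0 := by positivity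
  have F4 : h * ((β (v 0) - β (w 0)) * v 0)
      = 2 * τ * ((α * p + μ ((v 1 - v 0) / h) - α * v 0) * v 0) := by
    have e2 : h / (2 * τ) * (β (v 0) - β (w 0))
        = α * p + μ ((v 1 - v 0) / h) - α * v 0 := by linarith
    rw [div_mul_eq_mul_div, div_eq_iff h2τ] at e2
    linear_combination v 0 * e2
  have F5 : h * ((β (v N) - β (w N)) * v N)
      = 2 * τ * ((α * q - μ ((v N - v (N-1)) / h) - α * v N) * v N) := by
    have e2 : h / (2 * τ) * (β (v N) - β (w N))
        = α * q - μ ((v N - v (N-1)) / h) - α * v N := by linarith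
    rw [div_mul_eq_mul_div, div_eq_iff h2τ] at e2
    linear_combination v N * e2
  -- the exact energy identity (multiplied by 2τ)
  have hD : dissipation μ h α N v
      = h * (∑ i ∈ Finset.Icc 1 N, μ ((v i - v (i-1)) / h) * ((v i - v (i-1)) / h))
        + α * (v 0 ^ 2 + v N ^ 2) := rfl
  have hid : 2 * (h * ∑ i ∈ Finset.Icc 1 (N-1), (β (v i) - β (w i)) * v i)
      + h * ((β (v 0) - β (w 0)) * v 0) + h * ((β (v N) - β (w N)) * v N)
      + 2 * τ * dissipation μ h α N v
      = 2 * τ * (α * (p * v 0 + q * v N)) := by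
    rw [hD]
    linear_combination 2 * F1 + F4 + F5 + 2 * τ * F2 - 2 * τ * F3
  -- lower bounds by the energy differences
  have hG1 : h * (∑ i ∈ Finset.Icc 1 (N-1), Gfun β (v i)
      - ∑ i ∈ Finset.Icc 1 (N-1), Gfun β (w i))
      ≤ h * ∑ i ∈ Finset.Icc 1 (N-1), (β (v i) - β (w i)) * v i := by
    apply mul_le_mul_of_nonneg_left _ (le_of_lt hh)
    rw [← Finset.sum_sub_distrib]
    exact Finset.sum_le_sum fun i _ => Gfun_diff_le β hβc hβm (v i) (w i)
  have hG0 : h * (Gfun β (v 0) - Gfun β (w 0)) ≤ h * ((β (v 0) - β (w 0)) * v 0) :=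
    mul_le_mul_of_nonneg_left (Gfun_diff_le β hβc hβm (v 0) (w 0)) (le_of_lt hh)
  have hGN : h * (Gfun β (v N) - Gfun β (w N)) ≤ h * ((β (v N) - β (w N)) * v N) :=
    mul_le_mul_of_nonneg_left (Gfun_diff_le β hβc hβm (v N) (w N)) (le_of_lt hh)
  -- nonnegativity of the dissipation sum
  have hSD : 0 ≤ τ * (h * ∑ i ∈ Finset.Icc 1 N,
      μ ((v i - v (i-1)) / h) * ((v i - v (i-1)) / h)) := by
    apply mul_nonneg (le_of_lt hτ)
    apply mul_nonneg (le_of_lt hh)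
    exact Finset.sum_nonneg fun i _ => hμs _
  -- boundary-data bound
  have hpq : 2 * τ * (α * (p * v 0 + q * v N))
      ≤ 2 * τ * α * uup ^ 2 + τ * (α * (v 0 ^ 2 + v N ^ 2)) := by
    have h1 : p * v 0 + q * v N ≤ uup ^ 2 + (v 0 ^ 2 + v N ^ 2) / 2 := by
      nlinarith [sq_nonneg (p - v 0), sq_nonneg (q - v N),
        mul_nonneg (sub_nonneg.2 hp2) (by linarith : (0:ℝ) ≤ uup + p),
        mul_nonneg (sub_nonneg.2 hq2) (by linarith : (0:ℝ) ≤ uup + q)]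
    have h2 := mul_le_mul_of_nonneg_left h1 (by positivity : (0:ℝ) ≤ 2 * τ * α)
    nlinarith
  rw [hD] at hid ⊢
  linarith [hid, hG1, hG0, hGN, hSD, hpq]

/-- uniform dissipation bound. There is a constant `C`, independent
of the mesh size and the time step, bounding `∑_{t^k ≤ T} τ D(u^k)` for every
discrete solution with interpolated initial data `u₀` and boundary data `u_∂`
(given here by its time traces `pbd`, `qbd` at `x = 0` and `x = ℓ`). -/
theorem uniform_dissipation_bound
    (ℓ α T : ℝ) (hℓ : 0 < ℓ) (hα : 0 < α) (hT : 0 < T)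
    (β : ℝ → ℝ) (hβc : Continuous β) (hβm : StrictMono β)
    (hβd : ∀ x : ℝ, x ≠ 0 → DifferentiableAt ℝ β x)
    (hβ' : ∀ x : ℝ, x ≠ 0 → 0 < deriv β x)
    (hB : Tendsto (fun u : ℝ => (∫ s in (0:ℝ)..u, β s) / |u|) (cocompact ℝ) atTop)
    (μ : ℝ → ℝ) (hμc : Continuous μ) (hμ0 : μ 0 = 0)
    (hμd : ∀ s : ℝ, s ≠ 0 → DifferentiableAt ℝ μ s)
    (hμ' : ∀ s : ℝ, s ≠ 0 → 0 < deriv μ s)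
    (ulow uup : ℝ) (hul : 0 < ulow) (hbnd : ulow ≤ uup)
    (u₀ : ℝ → ℝ) (hu₀ : ∀ x ∈ Set.Icc 0 ℓ, ulow ≤ u₀ x ∧ u₀ x ≤ uup)
    (pbd qbd : ℝ → ℝ)
    (hpl : ∃ K : NNReal, LipschitzWith K pbd) (hql : ∃ K : NNReal, LipschitzWith K qbd)
    (hpb : ∀ t : ℝ, 0 ≤ t → ulow ≤ pbd t ∧ pbd t ≤ uup)
    (hqb : ∀ t : ℝ, 0 ≤ t → ulow ≤ qbd t ∧ qbd t ≤ uup) :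
    ∃ C : ℝ, 0 < C ∧
      ∀ N : ℕ, 2 ≤ N → ∀ τ : ℝ, 0 < τ → τ < T → ∀ u : ℕ → ℕ → ℝ,
        (∀ i ≤ N, u 0 i = u₀ (i * (ℓ / N))) →
        (∀ k : ℕ, 1 ≤ k →
          DiscreteStep β μ (ℓ / N) τ α N (pbd (k * τ)) (qbd (k * τ)) (u (k - 1)) (u k)) →
        ∑ k ∈ Finset.Icc 1 (Nat.floor (T / τ)), τ * dissipation μ (ℓ / N) α N (u k) ≤ C := by
  have hβmono := hβm.monotone
  have hμs := mu_sign μ hμc hμ0 hμ'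
  have hGup : 0 ≤ Gfun β uup := Gfun_nonneg β hβc hβmono uup
  refine ⟨2 * ℓ * Gfun β uup + 2 * T * α * uup ^ 2 + 1, ?_, ?_⟩
  · have h1 : 0 ≤ 2 * ℓ * Gfun β uup := by
      apply mul_nonneg (by linarith) hGup
    have h2 : 0 ≤ 2 * T * α * uup ^ 2 :=
      mul_nonneg (mul_nonneg (by linarith) hα.le) (sq_nonneg uup)
    linarith
  · intro N hN τ hτ hτT u hinit hstep
    have hNpos : (0:ℝ) < N := by
      have : 0 < N := by omega
      exact_mod_cast this
    set h := ℓ / N with hhdef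
    have hh : 0 < h := div_pos hℓ hNpos
    set K := Nat.floor (T / τ) with hKdef
    -- per-step bound
    have hstepb : ∀ k : ℕ, 1 ≤ k → τ * dissipation μ h α N (u k) ≤
        2 * (Efun β h N (u (k - 1)) - Efun β h N (u k)) + 2 * τ * α * uup ^ 2 := by
      intro k hk
      have hkt : (0:ℝ) ≤ k * τ := by positivity
      have hp := hpb (k * τ) hkt
      have hq := hqb (k * τ) hkt
      exact step_bound β μ hβc hβmono hμs h τ α uup _ _ hh hτ hα
        (by linarith) hp.2 (by linarith) hq.2 N hN _ _ (hstep k hk)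
    have hsum : ∑ k ∈ Finset.Icc 1 K, τ * dissipation μ h α N (u k)
        ≤ ∑ k ∈ Finset.Icc 1 K,
            (2 * (Efun β h N (u (k - 1)) - Efun β h N (u k)) + 2 * τ * α * uup ^ 2) :=
      Finset.sum_le_sum fun k hk => hstepb k (Finset.mem_Icc.1 hk).1
    -- telescoping
    have htel : ∑ k ∈ Finset.Icc 1 K, (Efun β h N (u (k - 1)) - Efun β h N (u k))
        = Efun β h N (u 0) - Efun β h N (u K) := by
      rw [← Finset.Ico_add_one_right_eq_Icc, Finset.sum_Ico_eq_sum_range]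
      rw [show K + 1 - 1 = K from rfl]
      rw [Finset.sum_congr rfl (fun i _ => by
        rw [show 1 + i - 1 = i from by omega, show 1 + i = i + 1 from by omega])]
      exact Finset.sum_range_sub' (fun i => Efun β h N (u i)) K
    have hconst : ∑ _k ∈ Finset.Icc 1 K, (2 * τ * α * uup ^ 2)
        = (K : ℝ) * (2 * τ * α * uup ^ 2) := by
      rw [Finset.sum_const, Nat.card_Icc, nsmul_eq_mul]
      norm_num
    have hsplit : ∑ k ∈ Finset.Icc 1 K,
        (2 * (Efun β h N (u (k - 1)) - Efun β h N (u k)) + 2 * τ * α * uup ^ 2)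
        = 2 * (Efun β h N (u 0) - Efun β h N (u K)) + (K : ℝ) * (2 * τ * α * uup ^ 2) := by
      rw [Finset.sum_add_distrib, hconst, ← Finset.mul_sum, htel]
    rw [hsplit] at hsum
    -- energy nonneg
    have hGnn := Gfun_nonneg β hβc hβmono
    have hEK : 0 ≤ Efun β h N (u K) := by
      apply mul_nonneg hh.le
      have hs : 0 ≤ ∑ i ∈ Finset.Icc 1 (N-1), Gfun β (u K i) :=
        Finset.sum_nonneg fun i _ => hGnn _
      have := hGnn (u K 0); have := hGnn (u K N); linarith
    -- initial energy bound
    have hbound : ∀ i ≤ N, Gfun β (u 0 i) ≤ Gfun β uup := by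
      intro i hi
      rw [hinit i hi]
      have hiN : (i : ℝ) ≤ N := by exact_mod_cast hi
      have hx : (i : ℝ) * (ℓ / N) ∈ Set.Icc 0 ℓ := by
        constructor
        · positivity
        · calc (i:ℝ) * (ℓ / N) ≤ N * (ℓ / N) :=
              mul_le_mul_of_nonneg_right hiN (by positivity)
          _ = ℓ := by field_simp
      have hu := hu₀ _ hx
      exact Gfun_mono_bound β hβc hβmono _ _ (by linarith) hu.2
    have hE0 : Efun β h N (u 0) ≤ ℓ * Gfun β uup := by
      have hsumb : ∑ i ∈ Finset.Icc 1 (N-1), Gfun β (u 0 i)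
          ≤ ((N - 1 : ℕ) : ℝ) * Gfun β uup := by
        have := Finset.sum_le_card_nsmul (Finset.Icc 1 (N-1))
          (fun i => Gfun β (u 0 i)) (Gfun β uup)
          (fun i hi => hbound i (by rw [Finset.mem_Icc] at hi; omega))
        simpa [Nat.card_Icc, nsmul_eq_mul] using this
      have hcast : ((N - 1 : ℕ) : ℝ) = (N : ℝ) - 1 := by
        have h1 : 1 ≤ N := by omega
        push_cast [h1]
        ring
      rw [hcast] at hsumb
      have hG0 := hbound 0 (by omega)
      have hGN := hbound N le_rfl
      have hmain : ∑ i ∈ Finset.Icc 1 (N-1), Gfun β (u 0 i)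
          + Gfun β (u 0 0) / 2 + Gfun β (u 0 N) / 2 ≤ (N : ℝ) * Gfun β uup := by
        linarith
      calc Efun β h N (u 0) ≤ h * ((N : ℝ) * Gfun β uup) :=
            mul_le_mul_of_nonneg_left hmain hh.le
      _ = ℓ * Gfun β uup := by
            rw [hhdef]; field_simp
    -- K τ ≤ T
    have hKT : (K : ℝ) * τ ≤ T := by
      have hfl : (K : ℝ) ≤ T / τ := by
        rw [hKdef]
        exact Nat.floor_le (by positivity)
      calc (K : ℝ) * τ ≤ (T / τ) * τ := mul_le_mul_of_nonneg_right hfl hτ.le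
      _ = T := by field_simp
    have hfin : (K : ℝ) * (2 * τ * α * uup ^ 2) ≤ 2 * T * α * uup ^ 2 := by
      have h1 : (K : ℝ) * τ * (α * uup ^ 2) ≤ T * (α * uup ^ 2) :=
        mul_le_mul_of_nonneg_right hKT (mul_nonneg hα.le (sq_nonneg uup))
      nlinarith
    linarith [hsum, hE0, hfin, hEK]
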